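/- arXiv:0709.2584 — 2 statements merged into one kernel-verified Lean document; each statement's English description precedes it below -/
import Mathlib

section
/- In the root system of type A_2, let λ = 2λ_1ω_1 + 2λ_2ω_2 be a weight in 2Zω_1 ⊕ 2Zω_2. The set {μ dominant : μ ∈ λ − 2Z_{≥0}α_1 − 2Z_{≥0}α_2} is nonempty if and only if λ_1 + 2λ_2 ≥ 0 and 2λ_1 + λ_2 ≥ 0. -/
/-- The simple root `α₁` of `A₂` in `ω`-coordinates: `α₁ = 2ω₁ − ω₂`. -/
def A2.alpha1 : ℤ × ℤ := (2, -1)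

/-- The simple root `α₂` of `A₂` in `ω`-coordinates: `α₂ = −ω₁ + 2ω₂`. -/
def A2.alpha2 : ℤ × ℤ := (-1, 2)

/-- Dominance: both `ω`-coordinates nonnegative. -/
def A2.Dominant (v : ℤ × ℤ) : Prop := 0 ≤ v.1 ∧ 0 ≤ v.2

/-- In type `A₂`, for `λ = 2λ₁ω₁ + 2λ₂ω₂`, the set
`{μ dominant : μ ∈ λ − 2ℤ_{≥0}α₁ − 2ℤ_{≥0}α₂}` is nonempty if and only if
`λ₁ + 2λ₂ ≥ 0` and `2λ₁ + λ₂ ≥ 0`. -/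
theorem exists_dominant_mu_in_lambda_sub_cone_iff (l1 l2 : ℤ) :
    (∃ μ : ℤ × ℤ, A2.Dominant μ ∧ ∃ m n : ℤ, 0 ≤ m ∧ 0 ≤ n ∧
        μ = (2 * l1, 2 * l2) - (2 * m) • A2.alpha1 - (2 * n) • A2.alpha2) ↔
      (0 ≤ l1 + 2 * l2 ∧ 0 ≤ 2 * l1 + l2) := by
  constructor
  · rintro ⟨μ, ⟨h1, h2⟩, m, n, hm, hn, rfl⟩
    simp only [A2.alpha1, A2.alpha2, Prod.smul_mk, smul_eq_mul, Prod.fst_sub, Prod.snd_sub] at h1 h2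
    constructor <;> omega
  · rintro ⟨h1, h2⟩
    rcases le_or_gt 0 l1 with hl1 | hl1
    · rcases le_or_gt 0 l2 with hl2 | hl2
      · exact ⟨(2 * l1, 2 * l2), ⟨by omega, by omega⟩, 0, 0, le_refl _, le_refl _, by
          simp [A2.alpha1, A2.alpha2]⟩
      · refine ⟨(2 * l1 + 4 * l2, 0), ⟨by omega, by omega⟩, -l2, 0, by omega, le_refl _, ?_⟩
        simp only [A2.alpha1, A2.alpha2, Prod.smul_mk, smul_eq_mul, Prod.mk_sub_mk]
        simp only [Prod.mk.injEq]; omega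
    · refine ⟨(0, 4 * l1 + 2 * l2), ⟨by omega, by omega⟩, 0, -l1, le_refl _, by omega, ?_⟩
      simp only [A2.alpha1, A2.alpha2, Prod.smul_mk, smul_eq_mul, Prod.mk_sub_mk]
      simp only [Prod.mk.injEq]; omega
end

section
/- In the root system C_n (n ≥ 5), for the weight ν = xω_2 + yω_4 the quantity ⟨ν+ρ, α^∨⟩ is nonzero for all positive roots α of the form listed in Table 1 if and only if: x ∉ {−1,−2,−3}, y ∉ {−1,…,−2n+6}, x+y ∉ {−3,…,−2n+4}, and x+2y ∉ {−2n+4, −2n+3, −2n+2}. Equivalently, ν + ρ is regular (with respect to the roots in Φ_1⁺ of the symmetric pair Sp_{2n}/Sp_4×Sp_{2n−4}) exactly under these four conditions. -/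
/-- In type `C_n` (`n ≥ 5`), for the weight `ν = xω₂ + yω₄`,
the pairing `⟨ν+ρ, α^∨⟩` is nonzero for all positive roots `α ∈ Φ₁⁺` of the
symmetric pair `Sp_{2n}/Sp₄ × Sp_{2n−4}` (whose values are listed in Table 1)
if and only if `x ∉ {−1,−2,−3}`, `y ∉ {−1,…,−2n+6}`, `x+y ∉ {−3,…,−2n+4}` and
`x+2y ∉ {−2n+4,−2n+3,−2n+2}`. -/
theorem regular_iff_four_conditions (n : ℕ) (hn : 5 ≤ n) (x y : ℤ) :
    ((∀ i j : ℤ, (i = 1 ∨ i = 2) → (j = 3 ∨ j = 4) → x + (j - i) ≠ 0) ∧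
     (∀ i j : ℤ, (i = 1 ∨ i = 2) → 5 ≤ j → j ≤ (n : ℤ) → x + y + (j - i) ≠ 0) ∧
     (∀ i j : ℤ, (i = 3 ∨ i = 4) → 5 ≤ j → j ≤ (n : ℤ) → y + (j - i) ≠ 0) ∧
     (2 * x + 2 * y + 2 * (n : ℤ) - 1 ≠ 0) ∧
     (∀ i j : ℤ, (i = 1 ∨ i = 2) → (j = 3 ∨ j = 4) →
        x + 2 * y + 2 * (n : ℤ) + 2 - i - j ≠ 0) ∧
     (2 * y + 2 * (n : ℤ) - 5 ≠ 0) ∧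
     (∀ i j : ℤ, (i = 1 ∨ i = 2) → 5 ≤ j → j ≤ (n : ℤ) →
        x + y + 2 * (n : ℤ) + 2 - i - j ≠ 0) ∧
     (∀ i j : ℤ, (i = 3 ∨ i = 4) → 5 ≤ j → j ≤ (n : ℤ) →
        y + 2 * (n : ℤ) + 2 - i - j ≠ 0) ∧
     (∀ i : ℤ, (i = 1 ∨ i = 2) → x + y + (n : ℤ) + 1 - i ≠ 0) ∧
     (∀ i : ℤ, (i = 3 ∨ i = 4) → y + (n : ℤ) + 1 - i ≠ 0)) ↔
    ((x ≠ -1 ∧ x ≠ -2 ∧ x ≠ -3) ∧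
     (∀ m : ℤ, 1 ≤ m → m ≤ 2 * (n : ℤ) - 6 → y ≠ -m) ∧
     (∀ m : ℤ, 3 ≤ m → m ≤ 2 * (n : ℤ) - 4 → x + y ≠ -m) ∧
     (x + 2 * y ≠ -(2 * (n : ℤ) - 4) ∧ x + 2 * y ≠ -(2 * (n : ℤ) - 3) ∧
      x + 2 * y ≠ -(2 * (n : ℤ) - 2))) := by
  have hn' : (5 : ℤ) ≤ (n : ℤ) := by exact_mod_cast hn
  constructor
  · rintro ⟨h1, h2, h3, _h4, h5, _h6, h7, h8, h9, h10⟩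
    refine ⟨⟨?_, ?_, ?_⟩, ?_, ?_, ?_, ?_, ?_⟩
    · have := h1 2 3 (Or.inr rfl) (Or.inl rfl); omega
    · have := h1 1 3 (Or.inl rfl) (Or.inl rfl); omega
    · have := h1 1 4 (Or.inl rfl) (Or.inr rfl); omega
    · -- y ≠ -m for 1 ≤ m ≤ 2n-6
      intro m hm1 hm2
      by_cases ha : m ≤ (n : ℤ) - 4
      · have := h3 4 (m + 4) (Or.inr rfl) (by omega) (by omega); omega
      · by_cases hb : m = (n : ℤ) - 3
        · have := h3 3 (n : ℤ) (Or.inl rfl) (by omega) (by omega); omega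
        · by_cases hc : m = (n : ℤ) - 2
          · have := h10 3 (Or.inl rfl); omega
          · have := h8 3 (2 * (n : ℤ) - 1 - m) (Or.inl rfl) (by omega) (by omega); omega
    · -- x + y ≠ -m for 3 ≤ m ≤ 2n-4
      intro m hm1 hm2
      by_cases ha : m ≤ (n : ℤ) - 2
      · have := h2 2 (m + 2) (Or.inr rfl) (by omega) (by omega); omega
      · by_cases hb : m = (n : ℤ) - 1
        · have := h9 2 (Or.inr rfl); omega
        · by_cases hc : m = (n : ℤ)
          · have := h9 1 (Or.inl rfl); omega
          · by_cases hd : m ≤ 2 * (n : ℤ) - 5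
            · have := h7 2 (2 * (n : ℤ) - m) (Or.inr rfl) (by omega) (by omega); omega
            · have := h7 1 (2 * (n : ℤ) + 1 - m) (Or.inl rfl) (by omega) (by omega); omega
    · have := h5 2 4 (Or.inr rfl) (Or.inr rfl); omega
    · have := h5 1 4 (Or.inl rfl) (Or.inr rfl); omega
    · have := h5 1 3 (Or.inl rfl) (Or.inl rfl); omega
  · rintro ⟨⟨hx1, hx2, hx3⟩, hy, hxy, hz1, hz2, hz3⟩
    refine ⟨?_, ?_, ?_, by omega, ?_, by omega, ?_, ?_, ?_, ?_⟩
    · intro i j hi hj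
      have hi' : 1 ≤ i ∧ i ≤ 2 := by rcases hi with h | h <;> omega
      have hj' : 3 ≤ j ∧ j ≤ 4 := by rcases hj with h | h <;> omega
      omega
    · intro i j hi hj1 hj2
      have hi' : 1 ≤ i ∧ i ≤ 2 := by rcases hi with h | h <;> omega
      have := hxy (j - i) (by omega) (by omega); omega
    · intro i j hi hj1 hj2
      have hi' : 3 ≤ i ∧ i ≤ 4 := by rcases hi with h | h <;> omega
      have := hy (j - i) (by omega) (by omega); omega
    · intro i j hi hj
      have hi' : 1 ≤ i ∧ i ≤ 2 := by rcases hi with h | h <;> omega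
      have hj' : 3 ≤ j ∧ j ≤ 4 := by rcases hj with h | h <;> omega
      omega
    · intro i j hi hj1 hj2
      have hi' : 1 ≤ i ∧ i ≤ 2 := by rcases hi with h | h <;> omega
      have := hxy (2 * (n : ℤ) + 2 - i - j) (by omega) (by omega); omega
    · intro i j hi hj1 hj2
      have hi' : 3 ≤ i ∧ i ≤ 4 := by rcases hi with h | h <;> omega
      have := hy (2 * (n : ℤ) + 2 - i - j) (by omega) (by omega); omega
    · intro i hi
      have hi' : 1 ≤ i ∧ i ≤ 2 := by rcases hi with h | h <;> omega
      have := hxy ((n : ℤ) + 1 - i) (by omega) (by omega); omega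
    · intro i hi
      have hi' : 3 ≤ i ∧ i ≤ 4 := by rcases hi with h | h <;> omega
      have := hy ((n : ℤ) + 1 - i) (by omega) (by omega); omega
end
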